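/- Let n and l be positive integers and m an integer with gcd(m, n) = 1, and let m* be a multiplicative inverse of m mod n. Then S(1 + l·n·m*, l·n²) = 2/(l·n²) + l − 3. -/

import Mathlib

open scoped Classical
open Finset

/-- The sawtooth function `((x))`. -/
noncomputable def saw (x : ℝ) : ℝ :=
  if ∃ z : ℤ, (z : ℝ) = x then 0 else x - ⌊x⌋ - 1/2

/-- The classical Dedekind sum `s(m,n)`. -/
noncomputable def ded (m n : ℤ) : ℝ :=
  ∑ k ∈ Finset.Icc (1 : ℤ) n, saw ((k : ℝ) / n) * saw ((m : ℝ) * k / n)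

/-- The normalized Dedekind sum `S(m,n) = 12 s(m,n)`. -/
noncomputable def Sded (m n : ℤ) : ℝ := 12 * ded m n

/-! For `a` prime to `c`, `k ↦ a k mod c` permutes the residues mod `c`, so polarizing the products
in the Dedekind sum gives `s(a, c) = s(1, c) - (2c²)⁻¹ Σ_k (a k mod c - k)²`, and
`s(1, c) = (c - 1)(c - 2)/(12 c)`. For `a = 1 + l n m*` and `c = l n²`, write `k = n t + u` with
`0 ≤ u < n`: the residue of `a k` is `n ((t + l ρ) mod l n) + u` with `ρ = m* u mod n`, so for fixed
`u` the displacement comes from a cyclic shift of `t` by `l ρ`. Summing the squared displacements of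
a cyclic shift, and using that `u ↦ m* u mod n` permutes the residues mod `n`, gives
`Σ_k (a k mod c - k)² = (l n)³ Σ_{ρ < n} ρ (n - ρ) = (l n)³ (n³ - n)/6`, whence the formula. -/

theorem saw_add_intCast (x : ℝ) (z : ℤ) : saw (x + z) = saw x := by
  have hint : (∃ w : ℤ, (w : ℝ) = x + z) ↔ ∃ w : ℤ, (w : ℝ) = x :=
    ⟨fun ⟨w, hw⟩ => ⟨w - z, by push_cast; linarith⟩,
      fun ⟨w, hw⟩ => ⟨w + z, by push_cast; linarith⟩⟩
  simp only [saw, hint, Int.floor_add_intCast]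
  split_ifs <;> push_cast <;> ring

theorem saw_intCast (z : ℤ) : saw z = 0 := if_pos ⟨z, rfl⟩

theorem saw_eq_sub_half {x : ℝ} (h0 : 0 < x) (h1 : x < 1) : saw x = x - 1 / 2 := by
  have hfloor : ⌊x⌋ = 0 := Int.floor_eq_zero_iff.2 ⟨h0.le, h1⟩
  have hnot : ¬ ∃ z : ℤ, (z : ℝ) = x := by
    rintro ⟨z, rfl⟩
    rw [Int.floor_intCast] at hfloor
    subst hfloor
    simp at h0
  rw [saw, if_neg hnot, hfloor, Int.cast_zero, sub_zero]

theorem saw_intCast_div_emod (k c : ℤ) : saw ((k : ℝ) / c) = saw (((k % c : ℤ) : ℝ) / c) := by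
  rcases eq_or_ne c 0 with rfl | hc
  · simp
  have hk : (k : ℝ) / c = ((k % c : ℤ) : ℝ) / c + ((k / c : ℤ) : ℝ) := by
    have hc' : (c : ℝ) ≠ 0 := by exact_mod_cast hc
    field_simp
    exact_mod_cast (Int.emod_add_mul_ediv k c).symm
  rw [hk, saw_add_intCast]

theorem saw_intCast_div_of_mem_Ico {r c : ℤ} (hr : r ∈ Ico 0 c) :
    saw ((r : ℝ) / c) = if r = 0 then 0 else (r : ℝ) / c - 1 / 2 := by
  rw [mem_Ico] at hr
  have hc : (0 : ℝ) < c := by exact_mod_cast hr.1.trans_lt hr.2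
  split_ifs with h
  · simpa [h] using saw_intCast 0
  · refine saw_eq_sub_half (div_pos (by exact_mod_cast (lt_of_le_of_ne hr.1 (Ne.symm h))) hc) ?_
    rw [div_lt_one hc]
    exact_mod_cast hr.2

theorem two_mul_sum_Ico_zero_id {N : ℤ} (hN : 0 ≤ N) : 2 * ∑ k ∈ Ico 0 N, k = N * (N - 1) := by
  induction N, hN using Int.leInduction with
  | base => simp
  | succ N hN ih =>
    rw [← sum_Ico_add_eq_sum_Ico_add_one hN, mul_add, ih]
    ring

theorem six_mul_sum_Ico_zero_sq {N : ℤ} (hN : 0 ≤ N) :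
    6 * ∑ k ∈ Ico 0 N, k ^ 2 = N * (N - 1) * (2 * N - 1) := by
  induction N, hN using Int.leInduction with
  | base => simp
  | succ N hN ih =>
    rw [← sum_Ico_add_eq_sum_Ico_add_one hN, mul_add, ih]
    ring

theorem sum_emod_mul_comp {M : Type*} [AddCommMonoid M] {a c : ℤ} (hc : 0 < c)
    (h : IsCoprime a c) (f : ℤ → M) :
    ∑ k ∈ Ico 0 c, f (a * k % c) = ∑ k ∈ Ico 0 c, f k := by
  obtain ⟨b, v, hbv⟩ := h
  have hmem : ∀ x k : ℤ, x * k % c ∈ Ico 0 c := fun x k =>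
    mem_Ico.2 ⟨Int.emod_nonneg _ hc.ne', Int.emod_lt_of_pos _ hc⟩
  have hinv : ∀ x y, x * y + v * c = 1 → ∀ k ∈ Ico 0 c, x * (y * k % c) % c = k := by
    intro x y hxy k hk
    rw [mem_Ico] at hk
    rw [((Int.mod_modEq (y * k) c).mul_left x).eq,
      show x * (y * k) = k + c * (-(v * k)) by linear_combination k * hxy,
      Int.add_mul_emod_self_left, Int.emod_eq_of_lt hk.1 hk.2]
  exact sum_nbij' (fun k => a * k % c) (fun k => b * k % c) (fun k _ => hmem a k)
    (fun k _ => hmem b k) (hinv b a hbv) (hinv a b (by linear_combination hbv)) fun _ _ => rfl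

theorem emod_mul_eq_zero_iff {a c k : ℤ} (h : IsCoprime a c) (hk : k ∈ Ico 0 c) :
    a * k % c = 0 ↔ k = 0 := by
  rw [mem_Ico] at hk
  refine ⟨fun hak => ?_, fun hk0 => by simp [hk0]⟩
  exact Int.eq_zero_of_dvd_of_nonneg_of_lt hk.1 hk.2
    (h.symm.dvd_of_dvd_mul_left (Int.dvd_of_emod_eq_zero hak))

theorem ded_eq_sum_Ico (a c : ℤ) (hc : 0 < c) :
    ded a c = ∑ k ∈ Ico 0 c, saw ((k : ℝ) / c) * saw (((a * k % c : ℤ) : ℝ) / c) := by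
  set f : ℤ → ℝ := fun k => saw ((k : ℝ) / c) * saw ((a : ℝ) * k / c)
  have hc' : (c : ℝ) ≠ 0 := by exact_mod_cast hc.ne'
  have hf0 : f 0 = 0 := by simpa [f] using saw_intCast 0
  have hfc : f c = 0 := by simpa [f, div_self hc'] using Or.inl (saw_intCast 1)
  calc ded a c = ∑ k ∈ Icc 0 c, f k := by
        rw [Icc_eq_cons_Ioc hc.le, sum_cons, hf0, zero_add, ← Icc_add_one_left_eq_Ioc, zero_add]
        rfl
    _ = ∑ k ∈ Ico 0 c, f k := by rw [Icc_eq_cons_Ico hc.le, sum_cons, hfc, zero_add]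
    _ = _ := sum_congr rfl fun k _ => by simp only [f, ← saw_intCast_div_emod, Int.cast_mul]

theorem ded_one_eq_sum_sq (c : ℤ) (hc : 0 < c) :
    ded 1 c = ∑ k ∈ Ico 0 c, saw ((k : ℝ) / c) ^ 2 := by
  rw [ded_eq_sum_Ico 1 c hc]
  refine sum_congr rfl fun k hk => ?_
  rw [mem_Ico] at hk
  rw [one_mul, Int.emod_eq_of_lt hk.1 hk.2, sq]

theorem sum_Ico_div_sub_half_sq (c : ℤ) (hc : 0 < c) :
    ∑ k ∈ Ico 0 c, ((k : ℝ) / c - 1 / 2) ^ 2 = ((c : ℝ) ^ 2 + 2) / (12 * c) := by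
  have hc' : (c : ℝ) ≠ 0 := by exact_mod_cast hc.ne'
  have hid := congrArg (Int.cast : ℤ → ℝ) (two_mul_sum_Ico_zero_id hc.le)
  have hsq := congrArg (Int.cast : ℤ → ℝ) (six_mul_sum_Ico_zero_sq hc.le)
  push_cast at hid hsq
  have hcard : ((Ico 0 c).card : ℝ) = c := by
    rw [Int.card_Ico, sub_zero]; exact_mod_cast Int.toNat_of_nonneg hc.le
  have hexp : ∀ k : ℤ, ((k : ℝ) / c - 1 / 2) ^ 2 = (k : ℝ) ^ 2 / c ^ 2 - (k : ℝ) / c + 1 / 4 :=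
    fun k => by field_simp; ring
  simp only [hexp, sum_add_distrib, sum_sub_distrib, ← sum_div, sum_const, nsmul_eq_mul, hcard]
  field_simp
  linear_combination 8 * hsq - 24 * (c : ℝ) * hid

theorem ded_one (c : ℤ) (hc : 0 < c) : ded 1 c = (c - 1) * (c - 2) / (12 * c) := by
  have hsaw : ∀ k ∈ Ico 0 c, saw ((k : ℝ) / c) ^ 2 =
      ((k : ℝ) / c - 1 / 2) ^ 2 - if k = 0 then 1 / 4 else 0 := fun k hk => by
    rw [saw_intCast_div_of_mem_Ico hk]
    split_ifs with h <;> norm_num [h]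
  have hc' : (c : ℝ) ≠ 0 := by exact_mod_cast hc.ne'
  rw [ded_one_eq_sum_sq c hc, sum_congr rfl hsaw, sum_sub_distrib, sum_ite_eq',
    if_pos (mem_Ico.2 ⟨le_rfl, hc⟩), sum_Ico_div_sub_half_sq c hc]
  field_simp
  ring

theorem ded_eq_ded_one_sub {a c : ℤ} (hc : 0 < c) (h : IsCoprime a c) :
    ded a c = ded 1 c - (∑ k ∈ Ico 0 c, ((a * k % c - k : ℤ) : ℝ) ^ 2) / (2 * c ^ 2) := by
  set g : ℤ → ℝ := fun k => saw ((k : ℝ) / c)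
  have hmem : ∀ k, a * k % c ∈ Ico 0 c := fun k =>
    mem_Ico.2 ⟨Int.emod_nonneg _ hc.ne', Int.emod_lt_of_pos _ hc⟩
  have hdiff : ∀ k ∈ Ico 0 c, g (a * k % c) - g k = ((a * k % c - k : ℤ) : ℝ) / c := by
    intro k hk
    simp only [g, saw_intCast_div_of_mem_Ico hk, saw_intCast_div_of_mem_Ico (hmem k),
      emod_mul_eq_zero_iff h hk]
    split_ifs with hk0
    · simp [hk0]
    · push_cast; ring
  have hpolar : ∀ k, g k * g (a * k % c) =
      (g k ^ 2 + g (a * k % c) ^ 2 - (g (a * k % c) - g k) ^ 2) / 2 := fun k => by ring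
  rw [ded_eq_sum_Ico a c hc, ded_one_eq_sum_sq c hc]
  change ∑ k ∈ Ico 0 c, g k * g (a * k % c) = ∑ k ∈ Ico 0 c, g k ^ 2 - _
  simp only [hpolar]
  have hsq_diff : ∑ k ∈ Ico 0 c, (g (a * k % c) - g k) ^ 2 =
      (∑ k ∈ Ico 0 c, ((a * k % c - k : ℤ) : ℝ) ^ 2) / c ^ 2 := by
    rw [sum_div]
    exact sum_congr rfl fun k hk => by rw [hdiff k hk, div_pow]
  rw [← sum_div, sum_sub_distrib, sum_add_distrib, sum_emod_mul_comp hc h (fun r => g r ^ 2),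
    hsq_diff]
  ring

theorem six_mul_sum_Ico_zero_mul_sub {N : ℤ} (hN : 0 ≤ N) :
    6 * ∑ k ∈ Ico 0 N, k * (N - k) = (N - 1) * N * (N + 1) := by
  have hid := two_mul_sum_Ico_zero_id hN
  have hsq := six_mul_sum_Ico_zero_sq hN
  simp only [mul_sub, sum_sub_distrib, ← sq, ← sum_mul]
  linear_combination 3 * N * hid - hsq

theorem emod_mul_add_of_lt {n q u : ℤ} (x : ℤ) (hq : 0 < q) (hu0 : 0 ≤ u) (hun : u < n) :
    (n * x + u) % (n * q) = n * (x % q) + u := by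
  have hxq := Int.emod_lt_of_pos x hq
  have hx0 := Int.emod_nonneg x hq.ne'
  rw [show n * x + u = n * (x % q) + u + n * q * (x / q) by
      linear_combination n * (Int.emod_add_mul_ediv x q).symm,
    Int.add_mul_emod_self_left, Int.emod_eq_of_lt (by nlinarith) (by nlinarith)]

theorem sum_Ico_zero_mul_eq_sum_sum {M : Type*} [AddCommMonoid M] {n : ℤ} (hn : 0 < n) (q : ℤ)
    (f : ℤ → M) :
    ∑ k ∈ Ico 0 (n * q), f k = ∑ u ∈ Ico 0 n, ∑ t ∈ Ico 0 q, f (n * t + u) := by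
  rw [← sum_product']
  refine sum_nbij' (fun k => (k % n, k / n)) (fun p => n * p.2 + p.1) ?_ ?_ ?_ ?_ ?_
  · intro k hk
    simp only [mem_Ico, mem_product] at hk ⊢
    exact ⟨⟨Int.emod_nonneg k hn.ne', Int.emod_lt_of_pos k hn⟩, Int.ediv_nonneg hk.1 hn.le,
      (Int.ediv_lt_iff_lt_mul hn).2 (by linarith [hk.2])⟩
  · intro p hp
    simp only [mem_Ico, mem_product] at hp ⊢
    constructor <;> nlinarith
  · intro k _
    exact Int.mul_ediv_add_emod k n
  · intro p hp
    simp only [mem_Ico, mem_product] at hp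
    rw [Prod.ext_iff, add_comm, Int.add_mul_emod_self_left, Int.add_mul_ediv_left _ _ hn.ne',
      Int.emod_eq_of_lt hp.1.1 hp.1.2, Int.ediv_eq_zero_of_lt hp.1.1 hp.1.2, zero_add]
    exact ⟨rfl, rfl⟩
  · intro k _
    rw [Int.mul_ediv_add_emod k n]

theorem sum_sq_emod_add_sub {q s : ℤ} (hs0 : 0 ≤ s) (hsq : s ≤ q) :
    ∑ t ∈ Ico 0 q, ((t + s) % q - t) ^ 2 = q * s * (q - s) := by
  rw [← Ico_union_Ico_eq_Ico (b := q - s) (by linarith) (by linarith),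
    sum_union (Ico_disjoint_Ico_consecutive _ _ _)]
  have hlow : ∀ t ∈ Ico 0 (q - s), ((t + s) % q - t) ^ 2 = s ^ 2 := fun t ht => by
    rw [mem_Ico] at ht
    rw [Int.emod_eq_of_lt (by linarith) (by linarith)]
    ring
  have hhigh : ∀ t ∈ Ico (q - s) q, ((t + s) % q - t) ^ 2 = (q - s) ^ 2 := fun t ht => by
    rw [mem_Ico] at ht
    rw [show t + s = t + s - q + q * 1 by ring, Int.add_mul_emod_self_left,
      Int.emod_eq_of_lt (by linarith) (by linarith)]
    ring
  rw [sum_congr rfl hlow, sum_congr rfl hhigh, sum_const, sum_const, Int.card_Ico, Int.card_Ico,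
    nsmul_eq_mul, nsmul_eq_mul, Int.toNat_of_nonneg (by linarith),
    Int.toNat_of_nonneg (by linarith)]
  ring

theorem six_mul_sum_sq_emod_sub {n l mstar : ℤ} (hn : 0 < n) (hl : 0 < l)
    (hmstar : IsCoprime mstar n) :
    6 * ∑ k ∈ Ico 0 (l * n ^ 2), ((1 + l * n * mstar) * k % (l * n ^ 2) - k) ^ 2 =
      (l * n) ^ 3 * ((n - 1) * n * (n + 1)) := by
  have hq : 0 < l * n := mul_pos hl hn
  have hterm : ∀ u ∈ Ico 0 n, ∀ t, ((1 + l * n * mstar) * (n * t + u) % (n * (l * n)) -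
      (n * t + u)) ^ 2 = n ^ 2 * ((t + l * (mstar * u % n)) % (l * n) - t) ^ 2 := by
    intro u hu t
    rw [mem_Ico] at hu
    rw [show (1 + l * n * mstar) * (n * t + u) = n * (t + l * (mstar * u % n)) + u +
        n * (l * n) * (mstar * t + mstar * u / n) by
          linear_combination l * n * (Int.mul_ediv_add_emod (mstar * u) n).symm,
      Int.add_mul_emod_self_left, emod_mul_add_of_lt _ hq hu.1 hu.2]
    ring
  have hinner : ∀ u ∈ Ico 0 n, ∑ t ∈ Ico 0 (l * n),
      ((1 + l * n * mstar) * (n * t + u) % (n * (l * n)) - (n * t + u)) ^ 2 =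
      (l * n) ^ 3 * ((mstar * u % n) * (n - mstar * u % n)) := by
    intro u hu
    have hρ0 := Int.emod_nonneg (mstar * u) hn.ne'
    have hρn := Int.emod_lt_of_pos (mstar * u) hn
    rw [sum_congr rfl fun t _ => hterm u hu t, ← mul_sum,
      sum_sq_emod_add_sub (mul_nonneg hl.le hρ0) (mul_le_mul_of_nonneg_left hρn.le hl.le)]
    ring
  rw [show l * n ^ 2 = n * (l * n) by ring, sum_Ico_zero_mul_eq_sum_sum hn, sum_congr rfl hinner,
    ← mul_sum, sum_emod_mul_comp hn hmstar (fun r => r * (n - r))]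
  linear_combination (l * n) ^ 3 * six_mul_sum_Ico_zero_mul_sub hn.le

theorem power_case_formula_general (n l : ℤ) (hn : 0 < n) (hl : 0 < l) (m mstar : ℤ)
    (hinv : m * mstar ≡ 1 [ZMOD n]) :
    Sded (1 + l * n * mstar) (l * n ^ 2) =
      2 / ((l : ℝ) * (n : ℝ) ^ 2) + (l : ℝ) - 3 := by
  have hc : 0 < l * n ^ 2 := by positivity
  have hcop : IsCoprime (1 + l * n * mstar) (l * n ^ 2) :=
    ⟨1 - l * n * mstar, l * mstar ^ 2, by ring⟩
  have hmstar : IsCoprime mstar n := by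
    obtain ⟨t, ht⟩ := hinv.dvd
    exact ⟨m, t, by linear_combination -ht⟩
  have hsum := congrArg (Int.cast : ℤ → ℝ) (six_mul_sum_sq_emod_sub hn hl hmstar)
  push_cast at hsum
  have hn' : (n : ℝ) ≠ 0 := by exact_mod_cast hn.ne'
  have hl' : (l : ℝ) ≠ 0 := by exact_mod_cast hl.ne'
  rw [Sded, ded_eq_ded_one_sub hc hcop, ded_one _ hc]
  push_cast
  field_simp
  linear_combination -2 * hsum

theorem power_case_formula (n l : ℤ) (hn : 0 < n) (hl : 0 < l) (m mstar : ℤ)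
    (hm : Int.gcd m n = 1) (hinv : m * mstar ≡ 1 [ZMOD n]) :
    Sded (1 + l * n * mstar) (l * n ^ 2) =
      2 / ((l : ℝ) * (n : ℝ) ^ 2) + (l : ℝ) - 3 :=
  power_case_formula_general n l hn hl m mstar hinv
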